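/- arXiv:1406.3279 — 4 statements merged into one kernel-verified Lean document; each statement's English description precedes it below -/
import Mathlib

section
/- Let n, B, K be natural numbers with B ≥ 2, and let F be a finite family of block assignments β : Fin (2n) → Fin K, each of whose fibers has at most B elements. Suppose that for every bijection σ : Fin n ≃ Fin n there exists some β ∈ F with β(i) = β(n + σ(i)) for all i ∈ Fin n. Then |F| · ⌊B/2⌋^n ≥ n!. -/
/-!
If `β` solves some matching `σ₀`, then `σ₀` pairs the left atoms of each block bijectively with
the partners in that block, so a block of size at most `B` holds at most `⌊B/2⌋` partners. Any
matching solved by `β` sends `i` to a partner in the block of `i`, so `β` solves at most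
`⌊B/2⌋^n` matchings, and covering all `n!` of them forces `|F| · ⌊B/2⌋^n ≥ n!`.
-/

open Finset Function

section
variable {ι α κ : Type*} [Fintype ι] [Fintype α] [DecidableEq κ]

/-- The atoms are `e (.inl i)` and their partners `e (.inr j)`; `σ` matches `i` with `σ i`. -/
def Solves (e : ι ⊕ ι → α) (b : α → κ) (σ : Equiv.Perm ι) : Prop :=
  ∀ i, b (e (.inl i)) = b (e (.inr (σ i)))

instance (e : ι ⊕ ι → α) (b : α → κ) : DecidablePred (Solves e b) :=
  fun _ => Fintype.decidableForallFintype

lemma card_filter_sum_eq (P : ι ⊕ ι → Prop) [DecidablePred P] :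
    #{s | P s} = #{i | P (.inl i)} + #{j | P (.inr j)} := by
  simp only [card_filter, Fintype.sum_sum_type]

lemma card_block_right_le_half {e : ι ⊕ ι → α} (he : Injective e) {b : α → κ}
    {σ : Equiv.Perm ι} (hσ : Solves e b σ) {B : ℕ} (k : κ) (hk : #{x | b x = k} ≤ B) :
    #{j | b (e (.inr j)) = k} ≤ B / 2 := by
  have hleft : #{i | b (e (.inl i)) = k} = #{j | b (e (.inr j)) = k} :=
    card_equiv σ fun i => by simp [hσ i]
  have hsum : #{s | b (e s) = k} ≤ #{x | b x = k} :=
    card_le_card_of_injOn e (fun s hs => by simpa using hs) he.injOn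
  rw [card_filter_sum_eq] at hsum
  omega

lemma card_solves_le [DecidableEq ι] {e : ι ⊕ ι → α} (he : Injective e) {b : α → κ} {B : ℕ}
    (hb : ∀ k, #{x | b x = k} ≤ B) :
    #{σ | Solves e b σ} ≤ (B / 2) ^ Fintype.card ι := by
  rcases eq_empty_or_nonempty {σ | Solves e b σ} with h | ⟨σ₀, hmem⟩
  · simp [h]
  have hσ₀ : Solves e b σ₀ := (mem_filter.mp hmem).2
  let T i : Finset ι := {j | b (e (.inr j)) = b (e (.inl i))}
  calc #{σ | Solves e b σ}
      ≤ #(Fintype.piFinset T) :=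
        card_le_card_of_injOn (⇑) (fun σ hσ => Fintype.mem_piFinset.2 fun i =>
          mem_filter.2 ⟨mem_univ _, ((mem_filter.mp hσ).2 i).symm⟩) DFunLike.coe_injective.injOn
    _ = ∏ i, #(T i) := Fintype.card_piFinset T
    _ ≤ ∏ _i : ι, B / 2 := prod_le_prod' fun i _ => card_block_right_le_half he hσ₀ _ (hb _)
    _ = (B / 2) ^ Fintype.card ι := by simp
end

/-- If a finite family `F` of block assignments `β : Fin (2n) → Fin K`, each with
fibers of size at most `B` (where `B ≥ 2`), solves every proximate-neighbors
instance `σ : Fin n ≃ Fin n`, then `|F| · (B/2)^n ≥ n!`. -/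
theorem stmt2 (n B K : ℕ) (F : Finset (Fin (2 * n) → Fin K))
    (hfib : ∀ β ∈ F, ∀ k : Fin K, (Finset.univ.filter fun x => β x = k).card ≤ B)
    (hcov : ∀ σ : Equiv.Perm (Fin n), ∃ β ∈ F, ∀ i : Fin n,
      β ⟨i.val, by omega⟩ = β ⟨n + (σ i).val, by omega⟩) :
    Nat.factorial n ≤ F.card * (B / 2) ^ n := by
  let e : Fin n ⊕ Fin n → Fin (2 * n) :=
    Sum.elim (fun i => ⟨i, by omega⟩) (fun j => ⟨n + j, by omega⟩)
  have he : Injective e := by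
    rintro (i | i) (j | j) h <;> simp [e, Fin.ext_iff] at h ⊢ <;> omega
  choose g hgF hg using hcov
  have hcount := card_le_mul_card_image_of_maps_to (s := univ) (fun σ _ => hgF σ) ((B / 2) ^ n)
    fun β hβ => calc
      #{σ | g σ = β} ≤ #{σ | Solves e β σ} := card_le_card fun σ hσ => by
        simp only [mem_filter, mem_univ, true_and] at hσ ⊢
        exact hσ ▸ hg σ
      _ ≤ (B / 2) ^ n := by simpa using card_solves_le he (hfib β hβ)
  simpa [Fintype.card_perm, mul_comm] using hcount
end

section
/- Let n ≥ 2 and let w ∈ FreeSemigroup (Fin n) be the product of(0)·of(1)···of(n−1). Let T ≥ 1 and let c : Fin T → FreeSemigroup (Fin n) be a straight-line program: for every t, either c(t) = of(i) for some i ∈ Fin n, or there exist a, b < t with c(t) = c(a)·c(b); and suppose c(T−1) = w. Then for every index i with i + 1 < n there exist t and a, b < t such that c(t) = c(a)·c(b), where c(a) = of(h)·of(h+1)···of(i) for some h ≤ i and c(b) = of(i+1)·of(i+2)···of(k) for some k with i < k < n. -/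
/-- Product `f j * f (j+1) * ⋯ * f (j+m)` in a semigroup. -/
def sprod {α : Type*} [Semigroup α] (f : ℕ → α) (j : ℕ) : ℕ → α
  | 0 => f j
  | m + 1 => sprod f j m * f (j + (m + 1))

/-- The `i`-th generator of the free semigroup on `Fin n` (indices taken mod `n`). -/
def gen (n : ℕ) (hn : 0 < n) (i : ℕ) : FreeSemigroup (Fin n) :=
  FreeSemigroup.of ⟨i % n, Nat.mod_lt i hn⟩

/-- The contiguous product `of(j) · of(j+1) · ⋯ · of(k)` of generators. -/
def seg (n : ℕ) (hn : 0 < n) (j k : ℕ) : FreeSemigroup (Fin n) :=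
  sprod (gen n hn) j (k - j)

/-!
Follow the program backwards from its last value. Every value that is a segment
`of(j)⋯of(k)` with `j ≤ i < k` is not a generator, so it was computed as a product, and
in the free semigroup the two factors are again segments `of(j)⋯of(l)` and
`of(l+1)⋯of(k)`. If `l = i` this is the required step; otherwise one of the factors
still contains the boundary between `i` and `i + 1` and was computed earlier, so
induction on the position in the program finishes the argument.
-/

open FreeSemigroup

section Words

variable {α : Type*}

lemma toList_toFreeMonoid_injective :
    Function.Injective fun x : FreeSemigroup α => (toFreeMonoid x).toList :=
  FreeMonoid.toList.injective.comp toFreeMonoid_injective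

lemma toList_toFreeMonoid_ne_nil (x : FreeSemigroup α) : (toFreeMonoid x).toList ≠ [] := fun h =>
  toFreeMonoid_ne_one x (FreeMonoid.toList.injective h)

lemma toList_toFreeMonoid_sprod (g : ℕ → α) (j m : ℕ) :
    (toFreeMonoid (sprod (of ∘ g) j m)).toList = (List.range' j (m + 1)).map g := by
  induction m with
  | zero => rfl
  | succ m ih => simp [sprod, ih, List.range'_concat (n := m + 1)]

lemma length_sprod (g : ℕ → α) (j m : ℕ) : (sprod (of ∘ g) j m).length = m + 1 := by
  induction m with
  | zero => rfl
  | succ m ih => rw [sprod, length_mul, ih]; rfl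

lemma exists_lt_of_mul_eq_sprod (g : ℕ → α) {x y : FreeSemigroup α} {j m : ℕ}
    (h : x * y = sprod (of ∘ g) j m) :
    ∃ d < m, x = sprod (of ∘ g) j d ∧ y = sprod (of ∘ g) (j + d + 1) (m - d - 1) := by
  have hword := congrArg (fun z => (toFreeMonoid z).toList) h
  simp only [map_mul, FreeMonoid.toList_mul, toList_toFreeMonoid_sprod] at hword
  obtain ⟨d, hd⟩ : ∃ d, (toFreeMonoid x).toList.length = d + 1 :=
    Nat.exists_eq_add_one.mpr (List.length_pos_iff.mpr (toList_toFreeMonoid_ne_nil x))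
  have hlen := congrArg List.length hword
  have hy_pos := List.length_pos_iff.mpr (toList_toFreeMonoid_ne_nil y)
  simp only [List.length_append, List.length_map, List.length_range'] at hlen
  have hdm : d < m := by omega
  rw [show m + 1 = (d + 1) + (m - d) by omega, ← List.range'_append, List.map_append] at hword
  obtain ⟨hx, hy⟩ := List.append_inj hword (by simp [hd])
  refine ⟨d, hdm, toList_toFreeMonoid_injective ?_, toList_toFreeMonoid_injective ?_⟩
  · simp only [hx, toList_toFreeMonoid_sprod]
  · simp only [hy, toList_toFreeMonoid_sprod, show m - d - 1 + 1 = m - d by omega]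
    congr 2
    omega

end Words

section Segments

variable {n : ℕ} (hn : 0 < n)

lemma sprod_gen_eq : sprod (gen n hn) = sprod (of ∘ fun i => ⟨i % n, Nat.mod_lt i hn⟩) := rfl

lemma seg_ne_of {j k : ℕ} (hjk : j < k) (a : Fin n) : seg n hn j k ≠ of a := fun h => by
  have := congrArg FreeSemigroup.length h
  rw [seg, sprod_gen_eq, length_sprod, length_of] at this
  omega

lemma exists_seg_of_mul_eq_seg {x y : FreeSemigroup (Fin n)} {j k : ℕ}
    (h : x * y = seg n hn j k) :
    ∃ l, j ≤ l ∧ l < k ∧ x = seg n hn j l ∧ y = seg n hn (l + 1) k := by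
  rw [seg, sprod_gen_eq] at h
  obtain ⟨d, hd, rfl, rfl⟩ := exists_lt_of_mul_eq_sprod _ h
  refine ⟨j + d, by omega, by omega, ?_, ?_⟩ <;>
    rw [seg, sprod_gen_eq] <;> congr 1 <;> omega

end Segments

section StraightLinePrograms

variable {α : Type*} {T : ℕ}

def IsStraightLineProgram (c : Fin T → FreeSemigroup α) : Prop :=
  ∀ t, (∃ i, c t = of i) ∨ ∃ a b, a < t ∧ b < t ∧ c t = c a * c b

def MultipliesAcross {n : ℕ} (hn : 0 < n) (c : Fin T → FreeSemigroup (Fin n)) (i : ℕ) : Prop :=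
  ∃ t a b : Fin T, a < t ∧ b < t ∧ c t = c a * c b ∧
    (∃ h ≤ i, c a = seg n hn h i) ∧ (∃ k, i < k ∧ k < n ∧ c b = seg n hn (i + 1) k)

theorem IsStraightLineProgram.multipliesAcross_of_eq_seg {n : ℕ} (hn : 0 < n)
    {c : Fin T → FreeSemigroup (Fin n)} (hc : IsStraightLineProgram c) {i : ℕ} (t : Fin T) :
    ∀ {j k : ℕ}, j ≤ i → i < k → k < n → c t = seg n hn j k → MultipliesAcross hn c i := by
  induction t using WellFoundedLT.induction with
  | _ t ih =>
    intro j k hji hik hkn ht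
    rcases hc t with ⟨g, hg⟩ | ⟨a, b, hat, hbt, hab⟩
    · exact absurd (ht.symm.trans hg) (seg_ne_of hn (by omega) g)
    obtain ⟨l, hjl, hlk, ha, hb⟩ := exists_seg_of_mul_eq_seg hn (hab.symm.trans ht)
    rcases lt_trichotomy l i with hli | rfl | hil
    · exact ih b hbt (by omega) hik hkn hb
    · exact ⟨t, a, b, hat, hbt, hab, ⟨j, hjl, ha⟩, ⟨k, hlk, hkn, hb⟩⟩
    · exact ih a hat hji hil (by omega) ha

end StraightLinePrograms

/-- Any straight-line program `c : Fin T → FreeSemigroup (Fin n)` (each value a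
generator or a product of two earlier values) whose last value is the full
product `of(0)·of(1)⋯of(n-1)` must, for every boundary index `i` with
`i + 1 < n`, compute some `c t = c a * c b` with `c a = of(h)⋯of(i)` for some
`h ≤ i` and `c b = of(i+1)⋯of(k)` for some `i < k < n`. -/
theorem stmt5 (n : ℕ) (hn : 2 ≤ n) (T : ℕ) (hT : 1 ≤ T)
    (c : Fin T → FreeSemigroup (Fin n))
    (hslp : ∀ t : Fin T,
      (∃ i : Fin n, c t = FreeSemigroup.of i) ∨
      (∃ a b : Fin T, a < t ∧ b < t ∧ c t = c a * c b))
    (hlast : c ⟨T - 1, by omega⟩ = seg n (by omega) 0 (n - 1)) :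
    ∀ i : ℕ, i + 1 < n →
      ∃ t a b : Fin T, a < t ∧ b < t ∧ c t = c a * c b ∧
        (∃ h : ℕ, h ≤ i ∧ c a = seg n (by omega) h i) ∧
        (∃ k : ℕ, i < k ∧ k < n ∧ c b = seg n (by omega) (i + 1) k) := fun i hi =>
  IsStraightLineProgram.multipliesAcross_of_eq_seg (by omega) hslp ⟨T - 1, by omega⟩
    (Nat.zero_le i) (by omega) (by omega) hlast
end

section
/- For real numbers N, M, B, P with 1 ≤ B, 0 < P, 0 < M and 4B ≤ N, define d(N,M,B,P) = max(2, min(M/B, N/(P·B))) and perm(N,M,B,P) = min( N/P , (N/(P·B)) · max(1, log_{d(N,M,B,P)}(N/B)) ). Then perm(N, 2M, 2B, P) ≥ (1/4) · perm(N, M, B, P). -/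
/-- The base `d(N,M,B,P) = max(2, min(M/B, N/(P·B)))` of the PEM permuting bound. -/
noncomputable def dval (N M B P : ℝ) : ℝ := max 2 (min (M / B) (N / (P * B)))

/-- The PEM permuting complexity
`perm(N,M,B,P) = min(N/P, (N/(P·B)) · max(1, log_d(N/B)))`. -/
noncomputable def permval (N M B P : ℝ) : ℝ :=
  min (N / P) ((N / (P * B)) * max 1 (Real.logb (dval N M B P) (N / B)))

/-!
Doubling `M` and `B` leaves `M/B` unchanged and halves `N/(P·B)`, so the base `d` can only
decrease, while the argument `N/B` of the logarithm is halved. Since `d ≥ 2`, halving the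
argument costs at most `1` in `log_d`, and `t - 1 ≥ t/2` once `t ≥ 2`; hence the truncated
logarithm drops by at most a factor `2`. Together with the halved prefactor `N/(P·B)` this
gives the factor `4`.
-/

namespace Real

theorem logb_le_logb_of_base_le {b c x : ℝ} (hc : 1 < c) (hcb : c ≤ b) (hx : 1 ≤ x) :
    logb b x ≤ logb c x :=
  div_le_div_of_nonneg_left (log_nonneg hx) (log_pos hc) (log_le_log (by linarith) hcb)

theorem logb_sub_one_le_logb_div_two {b x : ℝ} (hb : 2 ≤ b) (hx : 0 < x) :
    logb b x - 1 ≤ logb b (x / 2) := by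
  have hlog2 : logb b 2 ≤ 1 :=
    logb_self_eq_one (b := b) (by linarith) ▸ logb_le_logb_of_le (by linarith) two_pos hb
  rw [logb_div hx.ne' two_ne_zero]
  linarith

theorem half_max_one_logb_le {d d' x : ℝ} (hd : 2 ≤ d) (hd' : 1 < d') (hd'd : d' ≤ d)
    (hx : 2 ≤ x) :
    max 1 (logb d x) / 2 ≤ max 1 (logb d' (x / 2)) := by
  rcases le_total (logb d x) 2 with hsmall | hlarge
  · exact (div_le_one two_pos).2 (max_le one_le_two hsmall) |>.trans (le_max_left _ _)
  · have hshift := logb_sub_one_le_logb_div_two hd (by linarith : 0 < x)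
    have hbase := logb_le_logb_of_base_le hd' hd'd (by linarith : 1 ≤ x / 2)
    rw [max_eq_right (by linarith)]
    exact le_max_of_le_right (by linarith)

end Real

theorem quarter_min_le_min_half_mul {a c L L' : ℝ} (ha : 0 ≤ a) (hc : 0 ≤ c) (hL : L / 2 ≤ L') :
    1 / 4 * min a (c * L) ≤ min a (c / 2 * L') := by
  refine le_min ?_ ?_
  · linarith [min_le_left a (c * L)]
  · calc 1 / 4 * min a (c * L) ≤ c / 2 * (L / 2) := by linarith [min_le_right a (c * L)]
      _ ≤ c / 2 * L' := by gcongr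

theorem dval_double_le {N M B P : ℝ} (hN : 0 ≤ N) (hPB : 0 < P * B) :
    dval N (2 * M) (2 * B) P ≤ dval N M B P := by
  refine max_le_max le_rfl (min_le_min ?_ ?_)
  · rw [mul_div_mul_left _ _ two_ne_zero]
  · exact div_le_div_of_nonneg_left hN hPB (by linarith)

theorem stmt10_general (N M B P : ℝ) (hB : 1 ≤ B) (hP : 0 < P)
    (hN : 4 * B ≤ N) :
    permval N (2 * M) (2 * B) P ≥ (1 / 4) * permval N M B P := by
  have hB0 : 0 < B := by linarith
  have hN0 : 0 ≤ N := by linarith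
  have hNB : 2 ≤ N / B := (le_div_iff₀ hB0).2 (by linarith)
  have hlog := Real.half_max_one_logb_le (le_max_left _ _)
    (one_lt_two.trans_le (le_max_left _ _)) (dval_double_le (M := M) hN0 (mul_pos hP hB0)) hNB
  have hsplitN : N / (2 * B) = N / B / 2 := by ring
  have hsplitPB : N / (P * (2 * B)) = N / (P * B) / 2 := by ring
  rw [ge_iff_le, permval, permval, hsplitN, hsplitPB]
  exact quarter_min_le_min_half_mul (div_nonneg hN0 hP.le) (by positivity) hlog

/-- Doubling the cache and block sizes decreases the permuting bound by at most a
factor of 4: `perm(N, 2M, 2B, P) ≥ (1/4) · perm(N, M, B, P)`. -/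
theorem stmt10 (N M B P : ℝ) (hB : 1 ≤ B) (hP : 0 < P) (hM : 0 < M)
    (hN : 4 * B ≤ N) :
    permval N (2 * M) (2 * B) P ≥ (1 / 4) * permval N M B P :=
  stmt10_general N M B P hB hP hN
end

section
/- For all real numbers x > 0 and d ≥ 2, the series Σ_{i=0}^{∞} (3/4)^i · x · max(1, log_d((3/4)^i · x)) converges and its sum is at most 4 · x · max(1, log_d(x)). -/
/-! Since the truncated logarithm `max 1 (log_d ·)` is monotone, the `i`-th term is at most
`(3/4)^i · x · max 1 (log_d x)`, and the geometric series `Σ (3/4)^i` sums to `4`. -/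

open Set

section GeometricShrinking

variable {g : ℝ → ℝ} {r x : ℝ}

lemma geometric_term_le (hg : MonotoneOn g (Ioi 0)) (hr0 : 0 < r) (hr1 : r ≤ 1)
    (hx : 0 < x) (i : ℕ) :
    r ^ i * x * g (r ^ i * x) ≤ r ^ i * (x * g x) := by
  have hy : 0 < r ^ i * x := by positivity
  have hyx : r ^ i * x ≤ x := mul_le_of_le_one_left hx.le (pow_le_one₀ hr0.le hr1)
  calc r ^ i * x * g (r ^ i * x) ≤ r ^ i * x * g x :=
        mul_le_mul_of_nonneg_left (hg hy hx hyx) hy.le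
    _ = r ^ i * (x * g x) := mul_assoc _ _ _

lemma summable_and_tsum_le_of_geometric (hg : MonotoneOn g (Ioi 0))
    (hg0 : ∀ y, 0 < y → 0 ≤ g y) (hr0 : 0 < r) (hr1 : r < 1) (hx : 0 < x) :
    Summable (fun i : ℕ => r ^ i * x * g (r ^ i * x)) ∧
      ∑' i : ℕ, r ^ i * x * g (r ^ i * x) ≤ (1 - r)⁻¹ * (x * g x) := by
  have hle := geometric_term_le hg hr0 hr1.le hx
  have hnonneg (i : ℕ) : 0 ≤ r ^ i * x * g (r ^ i * x) := by
    have hy : 0 < r ^ i * x := by positivity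
    exact mul_nonneg hy.le (hg0 _ hy)
  have hgeo : Summable (fun i : ℕ => r ^ i * (x * g x)) :=
    (summable_geometric_of_lt_one hr0.le hr1).mul_right _
  have hsum := hgeo.of_nonneg_of_le hnonneg hle
  refine ⟨hsum, ?_⟩
  calc ∑' i : ℕ, r ^ i * x * g (r ^ i * x) ≤ ∑' i : ℕ, r ^ i * (x * g x) :=
        hsum.tsum_le_tsum hle hgeo
    _ = (1 - r)⁻¹ * (x * g x) := by
        rw [tsum_mul_right, tsum_geometric_of_lt_one hr0.le hr1]

end GeometricShrinking

lemma monotoneOn_max_one_logb {d : ℝ} (hd : 1 < d) :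
    MonotoneOn (fun y => max 1 (Real.logb d y)) (Ioi 0) :=
  fun _ hy _ _ hyz => max_le_max le_rfl (Real.logb_le_logb_of_le hd hy hyz)

/-- For `x > 0` and `d ≥ 2`, the series `Σ_i (3/4)^i · x · max(1, log_d((3/4)^i·x))`
converges and its sum is at most `4 · x · max(1, log_d x)`. -/
theorem stmt11 (x d : ℝ) (hx : 0 < x) (hd : 2 ≤ d) :
    Summable (fun i : ℕ =>
      (3 / 4 : ℝ) ^ i * x * max 1 (Real.logb d ((3 / 4 : ℝ) ^ i * x))) ∧
    (∑' i : ℕ, (3 / 4 : ℝ) ^ i * x * max 1 (Real.logb d ((3 / 4 : ℝ) ^ i * x))) ≤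
      4 * x * max 1 (Real.logb d x) := by
  obtain ⟨hsum, hle⟩ := summable_and_tsum_le_of_geometric
    (monotoneOn_max_one_logb (by linarith : (1 : ℝ) < d))
    (fun _ _ => zero_le_one.trans (le_max_left _ _)) (by norm_num : (0 : ℝ) < 3 / 4)
    (by norm_num) hx
  refine ⟨hsum, hle.trans_eq ?_⟩
  norm_num [mul_assoc]
end
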